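/- In a hidden Markov chain model, the partial state sequence entropy satisfies, for every 1 ≤ t ≤ T−1: H(S_0^t | X = x) = Σ_j P(S_t = j | X = x) { H(S_0^{t−1} | S_t = j, X_0^t = x_0^t) − log P(S_t = j | X = x) }, the sum ranging over the states j with P(S_t = j | X = x) > 0; equivalently, H(S_0^t | X = x) = H(S_0^{t−1} | S_t, X = x) + H(S_t | X = x) with H(S_0^{t−1} | S_t = j, X = x) = H(S_0^{t−1} | S_t = j, X_0^t = x_0^t). -/

import Mathlib

/-- A hidden Markov chain (HMC) model with `J` states, observation alphabet
`{0, …, V-1}` and sequence length `T`: initial probabilities, transition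
probabilities and emission probabilities. -/
structure HMCModel (J V T : ℕ) where
  init : Fin J → ℝ
  trans : Fin J → Fin J → ℝ
  emit : Fin J → Fin V → ℝ
  init_nonneg : ∀ j, 0 ≤ init j
  init_sum : ∑ j, init j = 1
  trans_nonneg : ∀ i j, 0 ≤ trans i j
  trans_sum : ∀ i, ∑ j, trans i j = 1
  emit_nonneg : ∀ j y, 0 ≤ emit j y
  emit_sum : ∀ j, ∑ y, emit j y = 1

namespace HMCModel

variable {J V T : ℕ} [NeZero J] [NeZero T]

/-- The joint law of the state sequence and the observed sequence:
`P(S = s, X = x) = π_{s_0} b_{s_0}(x_0) ∏_{t=1}^{T-1} p_{s_{t-1} s_t} b_{s_t}(x_t)`. -/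
noncomputable def joint (M : HMCModel J V T) (s : Fin T → Fin J) (x : Fin T → Fin V) : ℝ :=
  M.init (s 0) * M.emit (s 0) (x 0) *
    ∏ t ∈ Finset.univ.filter (fun t : Fin T => t ≠ 0),
      M.trans (s (t - 1)) (s t) * M.emit (s t) (x t)

open Classical in
/-- Probability of an event on (state sequence, observed sequence). -/
noncomputable def pr (M : HMCModel J V T)
    (E : (Fin T → Fin J) → (Fin T → Fin V) → Prop) : ℝ :=
  ∑ s : Fin T → Fin J, ∑ y : Fin T → Fin V, if E s y then M.joint s y else 0

/-- Conditional probability `P(A | B)`; it is `0` when the conditioning event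
has probability zero. -/
noncomputable def cpr (M : HMCModel J V T)
    (A B : (Fin T → Fin J) → (Fin T → Fin V) → Prop) : ℝ :=
  if 0 < M.pr B then M.pr (fun s y => A s y ∧ B s y) / M.pr B else 0

/-- Entropy of the random vector `f(S)` given the event `E`
(natural logarithm, with the convention `0 log 0 = 0`). -/
noncomputable def condEnt (M : HMCModel J V T) {α : Type*} [Fintype α]
    (f : (Fin T → Fin J) → α)
    (E : (Fin T → Fin J) → (Fin T → Fin V) → Prop) : ℝ :=
  -∑ a : α, M.cpr (fun s _ => f s = a) E * Real.log (M.cpr (fun s _ => f s = a) E)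

/-- Entropy of `f(S)` given the random vector `g(S)` and the event `E`:
`H(f(S) | g(S), E) = ∑_c P(g(S) = c | E) H(f(S) | g(S) = c, E)`. -/
noncomputable def condEntGiven (M : HMCModel J V T) {α β : Type*} [Fintype α] [Fintype β]
    (f : (Fin T → Fin J) → α) (g : (Fin T → Fin J) → β)
    (E : (Fin T → Fin J) → (Fin T → Fin V) → Prop) : ℝ :=
  ∑ c : β, M.cpr (fun s _ => g s = c) E * M.condEnt f (fun s y => g s = c ∧ E s y)

/-- The event `X = x`. -/
def obsEq (x : Fin T → Fin V) : (Fin T → Fin J) → (Fin T → Fin V) → Prop :=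
  fun _ y => y = x

/-- The partial state vector `S_0^{t-1}` (coordinates `≥ t` are padded by `0`). -/
def prefixVar (t : ℕ) (s : Fin T → Fin J) : Fin T → Fin J :=
  fun r => if (r : ℕ) < t then s r else 0

/-- The partial state vector `S_t^{T-1}` (coordinates `< t` are padded by `0`). -/
def suffixVar (t : ℕ) (s : Fin T → Fin J) : Fin T → Fin J :=
  fun r => if t ≤ (r : ℕ) then s r else 0

end HMCModel


/-!
Two ideas. First, `S_0^t` carries exactly the information of the pair `(S_0^{t-1}, S_t)`, so the
chain rule `H(A, B) = H(A | B) + H(B)` gives the second identity. Second, the joint law factors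
as a past weight, depending on `S_0^t` and `X_0^t` only, times a future weight, depending on
`S_t^{T-1}` and `X_{t+1}^{T-1}` only. Once `S_t = j` is fixed, the total future weight of the
continuations of a past `c` does not depend on `c`; it therefore cancels from
`P(S_0^{t-1} = c | S_t = j, X ∈ Y)`, both for `Y = {x}` and for `Y = {y | y_0^t = x_0^t}`.
-/

open Finset Real

namespace HMCModel

variable {J V T : ℕ}

local notation "Event" => (Fin T → Fin J) → (Fin T → Fin V) → Prop

section Probability

variable [NeZero T] (M : HMCModel J V T)

theorem joint_nonneg (s : Fin T → Fin J) (y : Fin T → Fin V) : 0 ≤ M.joint s y :=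
  mul_nonneg (mul_nonneg (M.init_nonneg _) (M.emit_nonneg _ _))
    (prod_nonneg fun _ _ => mul_nonneg (M.trans_nonneg _ _) (M.emit_nonneg _ _))

theorem pr_nonneg (E : Event) : 0 ≤ M.pr E :=
  sum_nonneg fun s _ => sum_nonneg fun y _ => by
    split_ifs
    exacts [M.joint_nonneg s y, le_rfl]

theorem pr_congr {E E' : Event} (h : ∀ s y, E s y ↔ E' s y) : M.pr E = M.pr E' :=
  congrArg M.pr (funext₂ fun s y => propext (h s y))

theorem pr_eq_zero {E : Event} (h : ∀ s y, ¬ E s y) : M.pr E = 0 := by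
  simp [pr, h]

theorem pr_mono {E E' : Event} (h : ∀ s y, E s y → E' s y) : M.pr E ≤ M.pr E' :=
  sum_le_sum fun s _ => sum_le_sum fun y _ => by
    by_cases hE : E s y
    · simp [hE, h s y hE]
    · simp only [hE, if_false]
      split_ifs
      exacts [M.joint_nonneg s y, le_rfl]

theorem pr_eq_sum_fiber {β : Type*} [Fintype β] (g : (Fin T → Fin J) → β) (E : Event) :
    M.pr E = ∑ c, M.pr (fun s y => g s = c ∧ E s y) := by
  classical
  symm
  simp only [pr]
  rw [Finset.sum_comm]
  refine sum_congr rfl fun s _ => ?_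
  rw [Finset.sum_comm]
  refine sum_congr rfl fun y _ => ?_
  by_cases hE : E s y <;> simp [hE]

theorem cpr_nonneg (A B : Event) : 0 ≤ M.cpr A B := by
  unfold cpr
  split_ifs
  exacts [div_nonneg (M.pr_nonneg _) (M.pr_nonneg _), le_rfl]

theorem cpr_of_pos (A : Event) {B : Event} (hB : 0 < M.pr B) :
    M.cpr A B = M.pr (fun s y => A s y ∧ B s y) / M.pr B :=
  if_pos hB

theorem cpr_congr {A A' B : Event} (h : ∀ s y, B s y → (A s y ↔ A' s y)) :
    M.cpr A B = M.cpr A' B := by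
  unfold cpr
  rw [M.pr_congr fun s y => and_congr_left (h s y)]

theorem pr_pos_of_cpr_pos {A B : Event} (h : 0 < M.cpr A B) :
    0 < M.pr (fun s y => A s y ∧ B s y) := by
  unfold cpr at h
  split_ifs at h
  · exact pos_of_mul_pos_left h (inv_nonneg.2 (M.pr_nonneg B))
  · exact absurd h (lt_irrefl 0)

theorem cpr_eq_zero_of_not_pos {A B : Event} (h : ¬ 0 < M.pr (fun s y => A s y ∧ B s y)) :
    M.cpr A B = 0 :=
  le_antisymm (not_lt.1 (mt M.pr_pos_of_cpr_pos h)) (M.cpr_nonneg A B)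

theorem sum_cpr_eq_one {β : Type*} [Fintype β] (g : (Fin T → Fin J) → β) {E : Event}
    (hE : 0 < M.pr E) : ∑ c, M.cpr (fun s _ => g s = c) E = 1 := by
  simp only [M.cpr_of_pos _ hE, ← sum_div, ← M.pr_eq_sum_fiber]
  exact div_self hE.ne'

theorem cpr_mul_cpr {α β : Type*} (f : (Fin T → Fin J) → α) (g : (Fin T → Fin J) → β)
    (E : Event) (a : α) (b : β) :
    M.cpr (fun s _ => f s = a) (fun s y => g s = b ∧ E s y) * M.cpr (fun s _ => g s = b) E
      = M.cpr (fun s _ => (f s, g s) = (a, b)) E := by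
  by_cases hE : 0 < M.pr E
  swap
  · simp [cpr, hE]
  by_cases hgE : 0 < M.pr (fun s y => g s = b ∧ E s y)
  · rw [M.cpr_of_pos _ hE, M.cpr_of_pos _ hE, M.cpr_of_pos _ hgE, div_mul_div_cancel₀ hgE.ne']
    exact congrArg (· / M.pr E) (M.pr_congr fun s y => by simp [and_assoc])
  · have h0 : M.pr (fun s y => (f s = a ∧ g s = b) ∧ E s y) = 0 :=
      le_antisymm ((M.pr_mono fun s y h => ⟨h.1.2, h.2⟩).trans
        (not_lt.1 hgE)) (M.pr_nonneg _)
    simp [cpr, hgE, hE, h0]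

theorem cpr_eq_of_pr_eq_mul {β : Type*} [Fintype β] (f : (Fin T → Fin J) → β) {B B' : Event}
    (hB : 0 < M.pr B) (hB' : 0 < M.pr B') (a : β → ℝ) {γ γ' : ℝ}
    (h : ∀ c, M.pr (fun s y => f s = c ∧ B s y) = a c * γ)
    (h' : ∀ c, M.pr (fun s y => f s = c ∧ B' s y) = a c * γ') (c : β) :
    M.cpr (fun s _ => f s = c) B = M.cpr (fun s _ => f s = c) B' := by
  have total : M.pr B = (∑ c, a c) * γ := by rw [M.pr_eq_sum_fiber f, sum_mul]; simp only [h]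
  have total' : M.pr B' = (∑ c, a c) * γ' := by rw [M.pr_eq_sum_fiber f, sum_mul]; simp only [h']
  have hγ : γ ≠ 0 := right_ne_zero_of_mul (total ▸ hB.ne')
  have hγ' : γ' ≠ 0 := right_ne_zero_of_mul (total' ▸ hB'.ne')
  rw [M.cpr_of_pos _ hB, M.cpr_of_pos _ hB', h, h', total, total', mul_div_mul_right _ _ hγ,
    mul_div_mul_right _ _ hγ']

end Probability

section Entropy

variable [NeZero T] (M : HMCModel J V T) {α β : Type*} [Fintype α] [Fintype β]

theorem condEnt_eq_sum_negMulLog (f : (Fin T → Fin J) → α) (E : Event) :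
    M.condEnt f E = ∑ a, negMulLog (M.cpr (fun s _ => f s = a) E) := by
  simp only [condEnt, negMulLog, neg_mul, sum_neg_distrib]

theorem condEnt_comp_of_injective {φ : α → β} (hφ : Function.Injective φ)
    (f : (Fin T → Fin J) → α) (E : Event) :
    M.condEnt (fun s => φ (f s)) E = M.condEnt f E := by
  simp only [condEnt_eq_sum_negMulLog]
  refine (Fintype.sum_of_injective φ hφ _ _ (fun b hb => ?_) fun a => ?_).symm
  · rw [M.cpr_eq_zero_of_not_pos, negMulLog_zero]
    rw [M.pr_eq_zero fun s y h => hb ⟨f s, h.1⟩]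
    exact lt_irrefl 0
  · exact congrArg negMulLog (M.cpr_congr fun s y _ => hφ.eq_iff.symm)

theorem condEnt_eq_of_comp {f : (Fin T → Fin J) → α} {g : (Fin T → Fin J) → β}
    {φ : β → α} {ψ : α → β} (hf : ∀ s, f s = φ (g s)) (hg : ∀ s, g s = ψ (f s)) (E : Event) :
    M.condEnt f E = M.condEnt g E := by
  calc M.condEnt f E = M.condEnt (fun s => (f s, g s)) E := by
        simp only [hg]
        exact (M.condEnt_comp_of_injective (φ := fun a => (a, ψ a))
          (fun a a' h => (Prod.ext_iff.1 h).1) f E).symm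
    _ = M.condEnt g E := by
        simp only [hf]
        exact M.condEnt_comp_of_injective (φ := fun b => (φ b, b))
          (fun b b' h => (Prod.ext_iff.1 h).2) g E

theorem condEnt_prod (f : (Fin T → Fin J) → α) (g : (Fin T → Fin J) → β) (E : Event) :
    M.condEnt (fun s => (f s, g s)) E = M.condEntGiven f g E + M.condEnt g E := by
  simp only [condEnt_eq_sum_negMulLog, condEntGiven, Fintype.sum_prod_type]
  rw [Finset.sum_comm, ← sum_add_distrib]
  refine sum_congr rfl fun b _ => ?_
  simp only [← M.cpr_mul_cpr, negMulLog_mul, sum_add_distrib, ← mul_sum, ← sum_mul,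
    ← condEnt_eq_sum_negMulLog]
  congr 1
  by_cases hb : 0 < M.pr (fun s y => g s = b ∧ E s y)
  · rw [M.sum_cpr_eq_one f hb, one_mul]
  · rw [M.cpr_eq_zero_of_not_pos hb, negMulLog_zero, mul_zero]

end Entropy

section Sequences

variable [NeZero J]

theorem prefixVar_prefixVar_of_le {k m : ℕ} (h : k ≤ m) (s : Fin T → Fin J) :
    prefixVar k (prefixVar m s) = prefixVar k s := by
  funext r
  simp only [prefixVar]
  split_ifs <;> first | rfl | omega

theorem prefixVar_succ_eq_update (t : Fin T) (s : Fin T → Fin J) :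
    prefixVar ((t : ℕ) + 1) s = Function.update (prefixVar t s) t (s t) := by
  funext r
  rcases eq_or_ne r t with rfl | hr
  · simp [prefixVar]
  · simp only [prefixVar, Function.update_of_ne hr]
    have : (r : ℕ) ≠ t := Fin.val_ne_of_ne hr
    split_ifs <;> first | rfl | omega

theorem prefixVar_eq_and_apply_eq_iff {t : Fin T} {c : Fin T → Fin J}
    (hc : prefixVar t c = c) (s : Fin T → Fin J) (j : Fin J) :
    prefixVar t s = c ∧ s t = j ↔ ∀ r ≤ t, s r = Function.update c t j r := by
  constructor
  · rintro ⟨rfl, rfl⟩ r hr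
    rcases eq_or_ne r t with rfl | hrt
    · simp
    · rw [Function.update_of_ne hrt, prefixVar, if_pos (Fin.lt_def.1 (lt_of_le_of_ne hr hrt))]
  · intro h
    refine ⟨funext fun r => ?_, by simpa using h t le_rfl⟩
    rw [← hc]
    simp only [prefixVar]
    split_ifs with hrt
    · exact (h r hrt.le).trans (Function.update_of_ne (show r < t from hrt).ne _ _)
    · rfl

end Sequences

section Factorization

variable [NeZero T] (M : HMCModel J V T)

noncomputable def pastWeight (t : Fin T) (s : Fin T → Fin J) (y : Fin T → Fin V) : ℝ :=
  M.init (s 0) * M.emit (s 0) (y 0) *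
    ∏ r with r ≠ 0 ∧ r ≤ t,
      M.trans (s (r - 1)) (s r) * M.emit (s r) (y r)

noncomputable def futureWeight (t : Fin T) (s : Fin T → Fin J) (y : Fin T → Fin V) : ℝ :=
  ∏ r with t < r, M.trans (s (r - 1)) (s r) * M.emit (s r) (y r)

theorem joint_eq_pastWeight_mul_futureWeight (t : Fin T) (s : Fin T → Fin J)
    (y : Fin T → Fin V) : M.joint s y = M.pastWeight t s y * M.futureWeight t s y := by
  have hsplit : (univ.filter fun r : Fin T => r ≠ 0 ∧ ¬ r ≤ t) = univ.filter (t < ·) :=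
    filter_congr fun r _ =>
      ⟨fun h => lt_of_not_ge h.2, fun h => ⟨((Fin.zero_le t).trans_lt h).ne', not_le.2 h⟩⟩
  rw [joint, pastWeight, futureWeight,
    ← prod_filter_mul_prod_filter_not (univ.filter fun r : Fin T => r ≠ 0) (· ≤ t),
    filter_filter, filter_filter, hsplit]
  ring

theorem pastWeight_congr {t : Fin T} {s s' : Fin T → Fin J} {y y' : Fin T → Fin V}
    (hs : ∀ r ≤ t, s r = s' r) (hy : ∀ r ≤ t, y r = y' r) :
    M.pastWeight t s y = M.pastWeight t s' y' := by
  have h0 : (0 : Fin T) ≤ t := Fin.zero_le t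
  rw [pastWeight, pastWeight, hs 0 h0, hy 0 h0]
  refine congrArg _ (prod_congr rfl fun r hr => ?_)
  obtain ⟨hr0, hrt⟩ := (mem_filter.1 hr).2
  have hpred : r - 1 ≤ t := by
    rw [Fin.le_def, Fin.val_sub_one_of_ne_zero hr0]
    exact (Nat.sub_le _ _).trans hrt
  rw [hs r hrt, hy r hrt, hs (r - 1) hpred]

theorem futureWeight_congr {t : Fin T} {s s' : Fin T → Fin J} {y y' : Fin T → Fin V}
    (hs : ∀ r, t ≤ r → s r = s' r) (hy : ∀ r, t < r → y r = y' r) :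
    M.futureWeight t s y = M.futureWeight t s' y' := by
  refine prod_congr rfl fun r hr => ?_
  have htr : t < r := (mem_filter.1 hr).2
  have hpred : t ≤ r - 1 := by
    rw [Fin.le_def, Fin.val_sub_one_of_ne_zero ((Fin.zero_le t).trans_lt htr).ne']
    exact Nat.le_sub_one_of_lt htr
  rw [hs r htr.le, hy r htr, hs (r - 1) hpred]

open Classical in
noncomputable def futureMass (t : Fin T) (g : Fin T → Fin J) (Y : (Fin T → Fin V) → Prop) :
    ℝ :=
  ∑ s with ∀ r ≤ t, s r = g r, ∑ y with Y y, M.futureWeight t s y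

theorem pr_agree_eq_pastWeight_mul_futureMass {t : Fin T} {x : Fin T → Fin V}
    {Y : (Fin T → Fin V) → Prop} (hY : ∀ y, Y y → ∀ r ≤ t, y r = x r) (g : Fin T → Fin J) :
    M.pr (fun s y => (∀ r ≤ t, s r = g r) ∧ Y y)
      = M.pastWeight t g x * M.futureMass t g Y := by
  classical
  simp only [pr, futureMass, sum_filter, mul_sum, mul_ite, mul_zero]
  refine sum_congr rfl fun s _ => ?_
  by_cases hs : ∀ r ≤ t, s r = g r
  · refine (if_pos hs).symm ▸ sum_congr rfl fun y _ => ?_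
    by_cases hy : Y y
    · rw [if_pos ⟨hs, hy⟩, if_pos hy, M.joint_eq_pastWeight_mul_futureWeight t,
        M.pastWeight_congr hs (hY y hy)]
    · simp [hy]
  · rw [if_neg hs]
    exact sum_eq_zero fun y _ => if_neg fun h => hs h.1

theorem futureMass_congr {t : Fin T} {g g' : Fin T → Fin J} (hg : g t = g' t)
    (Y : (Fin T → Fin V) → Prop) : M.futureMass t g Y = M.futureMass t g' Y := by
  have splice_mem : ∀ (h : Fin T → Fin J) (s : Fin T → Fin J),
      (fun r => if r ≤ t then h r else s r) ∈ univ.filter fun s => ∀ r ≤ t, s r = h r :=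
    fun h s => mem_filter.2 ⟨mem_univ _, fun r hr => if_pos hr⟩
  have splice_splice : ∀ (h h' s : Fin T → Fin J), (∀ r ≤ t, s r = h r) →
      (fun r => if r ≤ t then h r else if r ≤ t then h' r else s r) = s :=
    fun h h' s hs => funext fun r => by
      split_ifs with hr <;> first | exact (hs r hr).symm | rfl
  refine sum_nbij' (fun s r => if r ≤ t then g' r else s r)
    (fun s r => if r ≤ t then g r else s r)
    (fun s _ => splice_mem g' s) (fun s _ => splice_mem g s)
    (fun s hs => splice_splice g g' s (mem_filter.1 hs).2)
    (fun s hs => splice_splice g' g s (mem_filter.1 hs).2)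
    fun s hs => sum_congr rfl fun y _ =>
      M.futureWeight_congr (fun r htr => ?_) fun _ _ => rfl
  split_ifs with hrt
  · obtain rfl := le_antisymm hrt htr
    exact ((mem_filter.1 hs).2 r le_rfl).trans hg
  · rfl

end Factorization

section Markov

variable [NeZero J] [NeZero T] (M : HMCModel J V T)

theorem pr_prefixVar_eq_mul {t : Fin T} {x : Fin T → Fin V} {Y : (Fin T → Fin V) → Prop}
    (hY : ∀ y, Y y → ∀ r ≤ t, y r = x r) (j : Fin J) (c : Fin T → Fin J) :
    M.pr (fun s y => prefixVar t s = c ∧ (s t = j ∧ Y y))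
      = (if prefixVar t c = c then M.pastWeight t (Function.update c t j) x else 0)
        * M.futureMass t (fun _ => j) Y := by
  split_ifs with hc
  · rw [← M.futureMass_congr (g := Function.update c t j) (by simp),
      ← M.pr_agree_eq_pastWeight_mul_futureMass hY]
    exact M.pr_congr fun s y => by rw [← and_assoc, prefixVar_eq_and_apply_eq_iff hc]
  · rw [zero_mul]
    refine M.pr_eq_zero fun s y h => hc ?_
    rw [← h.1, prefixVar_prefixVar_of_le le_rfl]

theorem cpr_prefixVar_markov {x : Fin T → Fin V} {t : Fin T} {j : Fin J}
    (hj : 0 < M.pr (fun s y => s t = j ∧ y = x)) (c : Fin T → Fin J) :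
    M.cpr (fun s _ => prefixVar t s = c) (fun s y => s t = j ∧ y = x)
      = M.cpr (fun s _ => prefixVar t s = c) (fun s y => s t = j ∧ ∀ r ≤ t, y r = x r) :=
  M.cpr_eq_of_pr_eq_mul _ hj
    (hj.trans_le (M.pr_mono fun s y h => ⟨h.1, fun r _ => by rw [h.2]⟩)) _
    (M.pr_prefixVar_eq_mul (fun y hy r _ => by rw [hy]) j)
    (M.pr_prefixVar_eq_mul (fun y hy => hy) j) c

theorem condEnt_prefixVar_markov {x : Fin T → Fin V} {t : Fin T} {j : Fin J}
    (hj : 0 < M.pr (fun s y => s t = j ∧ y = x)) :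
    M.condEnt (prefixVar t) (fun s y => s t = j ∧ y = x)
      = M.condEnt (prefixVar t) (fun s y => s t = j ∧ ∀ r ≤ t, y r = x r) := by
  simp only [condEnt, M.cpr_prefixVar_markov hj]

theorem condEnt_prefixVar_succ (t : Fin T) (E : Event) :
    M.condEnt (prefixVar ((t : ℕ) + 1)) E
      = M.condEntGiven (prefixVar t) (fun s => s t) E + M.condEnt (fun s => s t) E := by
  rw [← M.condEnt_prod]
  refine M.condEnt_eq_of_comp (φ := fun p => Function.update p.1 t p.2)
    (ψ := fun a => (prefixVar t a, a t)) (prefixVar_succ_eq_update t) (fun s => ?_) E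
  simp [prefixVar_prefixVar_of_le (Nat.le_succ _), prefixVar]

end Markov

end HMCModel

open HMCModel

theorem hmc_partial_entropy_recursion_general
    {J V T : ℕ} [NeZero J] [NeZero T] (M : HMCModel J V T)
    (x : Fin T → Fin V)
    (t : Fin T)
    (L : Fin J → ℝ) (hL : ∀ j, L j = M.cpr (fun s _ => s t = j) (obsEq x)) :
    (M.condEnt (prefixVar ((t : ℕ) + 1)) (obsEq x)
      = ∑ j ∈ Finset.univ.filter (fun j : Fin J => 0 < L j),
          L j * (M.condEnt (prefixVar (t : ℕ))
                    (fun s y => s t = j ∧ ∀ r : Fin T, r ≤ t → y r = x r)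
                 - Real.log (L j)))
    ∧ M.condEnt (prefixVar ((t : ℕ) + 1)) (obsEq x)
        = M.condEntGiven (prefixVar (t : ℕ)) (fun s => s t) (obsEq x)
          + M.condEnt (fun s => s t) (obsEq x)
    ∧ ∀ j : Fin J, 0 < L j →
        M.condEnt (prefixVar (t : ℕ)) (fun s y => s t = j ∧ y = x)
          = M.condEnt (prefixVar (t : ℕ))
              (fun s y => s t = j ∧ ∀ r : Fin T, r ≤ t → y r = x r) := by
  have markov : ∀ j, 0 < L j → M.condEnt (prefixVar t) (fun s y => s t = j ∧ y = x)
      = M.condEnt (prefixVar t) (fun s y => s t = j ∧ ∀ r ≤ t, y r = x r) := fun j hj =>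
    M.condEnt_prefixVar_markov (M.pr_pos_of_cpr_pos (hL j ▸ hj))
  refine ⟨?_, M.condEnt_prefixVar_succ t _, markov⟩
  rw [M.condEnt_prefixVar_succ, condEntGiven, condEnt_eq_sum_negMulLog, ← sum_add_distrib,
    sum_filter]
  refine sum_congr rfl fun j _ => ?_
  simp only [← hL j, obsEq]
  split_ifs with hj
  · rw [← markov j hj, negMulLog]
    ring
  · rw [le_antisymm (not_lt.1 hj) (hL j ▸ M.cpr_nonneg _ _)]
    simp

/-- In a hidden Markov chain model, the partial state sequence
entropy satisfies, for every `1 ≤ t ≤ T-1`: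
`H(S_0^t | X = x) = ∑_j P(S_t = j | X = x) { H(S_0^{t-1} | S_t = j, X_0^t = x_0^t)
− log P(S_t = j | X = x) }`, the sum ranging over the states `j` with
`P(S_t = j | X = x) > 0`; equivalently,
`H(S_0^t | X = x) = H(S_0^{t-1} | S_t, X = x) + H(S_t | X = x)` with
`H(S_0^{t-1} | S_t = j, X = x) = H(S_0^{t-1} | S_t = j, X_0^t = x_0^t)`. -/
theorem hmc_partial_entropy_recursion
    {J V T : ℕ} [NeZero J] [NeZero T] (M : HMCModel J V T)
    (x : Fin T → Fin V) (hx : 0 < M.pr (obsEq x))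
    (t : Fin T) (ht : t ≠ 0)
    (L : Fin J → ℝ) (hL : ∀ j, L j = M.cpr (fun s _ => s t = j) (obsEq x)) :
    (M.condEnt (prefixVar ((t : ℕ) + 1)) (obsEq x)
      = ∑ j ∈ Finset.univ.filter (fun j : Fin J => 0 < L j),
          L j * (M.condEnt (prefixVar (t : ℕ))
                    (fun s y => s t = j ∧ ∀ r : Fin T, r ≤ t → y r = x r)
                 - Real.log (L j)))
    ∧ M.condEnt (prefixVar ((t : ℕ) + 1)) (obsEq x)
        = M.condEntGiven (prefixVar (t : ℕ)) (fun s => s t) (obsEq x)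
          + M.condEnt (fun s => s t) (obsEq x)
    ∧ ∀ j : Fin J, 0 < L j →
        M.condEnt (prefixVar (t : ℕ)) (fun s y => s t = j ∧ y = x)
          = M.condEnt (prefixVar (t : ℕ))
              (fun s y => s t = j ∧ ∀ r : Fin T, r ≤ t → y r = x r) :=
  hmc_partial_entropy_recursion_general M x t L hL
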